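/- arXiv:2501.12543 — 8 statements merged into one kernel-verified Lean document; each statement's English description precedes it below -/
import Mathlib

section
/- Let a, Γ satisfy 0 < a, 1 < Γ < 2, and 0 < a + Γ - 1 < 1, and define Q(x) = (x + (a/(Γ-1))((1+x)^(-(Γ-1)/a) - 1))/(a+Γ-1) for x > -1. Then Q(x) ≥ 0 for all x > -1, and Q(x) = 0 if and only if x = 0. -/
noncomputable def Qfun (a Γ x : ℝ) : ℝ :=
  (x + (a/(Γ-1)) * ((1+x) ^ (-(Γ-1)/a) - 1)) / (a+Γ-1)

/-!
With `r = -(Γ-1)/a < 0` and `c = a/(Γ-1) > 0` we have `c * r = -1`, so the numerator of `Q` is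
`c * ((1+x)^r - (1 + r x))`, which Bernoulli's inequality for negative exponents makes positive
for `x ≠ 0`.
-/

open Real

theorem one_add_mul_self_lt_rpow_one_add_of_neg {s : ℝ} (hs : -1 < s) (hs' : s ≠ 0) {p : ℝ}
    (hp : p < 0) : 1 + p * s < (1 + s) ^ p := by
  have ht : 0 < 1 + s := by linarith
  -- Apply the case of exponent `1 - p > 1` to `(1 + s)⁻¹ = 1 + u`, then multiply by `1 + s`.
  set u := (1 + s)⁻¹ - 1 with hu
  have hu_ge : -1 ≤ u := by have := inv_pos.mpr ht; linarith
  have hu_ne : u ≠ 0 := by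
    rw [hu, sub_ne_zero, Ne, inv_eq_one]
    intro h; exact hs' (by linarith)
  have hbern := one_add_mul_self_lt_rpow_one_add hu_ge hu_ne (p := 1 - p) (by linarith)
  have hpow : (1 + u) ^ (1 - p) * (1 + s) = (1 + s) ^ p := by
    rw [hu, add_sub_cancel, inv_rpow ht.le, ← rpow_neg ht.le, neg_sub,
      ← rpow_add_one ht.ne', sub_add_cancel]
  have hlin : (1 + (1 - p) * u) * (1 + s) = 1 + p * s := by
    rw [hu]; field_simp; ring
  rw [← hpow, ← hlin]
  exact mul_lt_mul_of_pos_right hbern ht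

theorem Qfun_eq_mul_bernoulli_gap {a Γ : ℝ} (ha : a ≠ 0) (hΓ : Γ ≠ 1) (x : ℝ) :
    Qfun a Γ x = a / (Γ - 1) / (a + Γ - 1) *
      ((1 + x) ^ (-(Γ - 1) / a) - (1 + (-(Γ - 1) / a) * x)) := by
  have hΓ' : Γ - 1 ≠ 0 := sub_ne_zero.mpr hΓ
  unfold Qfun
  field_simp
  ring

theorem Qfun_zero (a Γ : ℝ) : Qfun a Γ 0 = 0 := by
  simp [Qfun]

theorem Qfun_pos {a Γ x : ℝ} (ha : 0 < a) (hΓ : 1 < Γ) (h1 : 0 < a + Γ - 1) (hx : -1 < x)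
    (hx0 : x ≠ 0) : 0 < Qfun a Γ x := by
  rw [Qfun_eq_mul_bernoulli_gap ha.ne' hΓ.ne']
  have hr : -(Γ - 1) / a < 0 := div_neg_of_neg_of_pos (by linarith) ha
  have hgap := one_add_mul_self_lt_rpow_one_add_of_neg hx hx0 hr
  have hc : 0 < a / (Γ - 1) / (a + Γ - 1) := div_pos (div_pos ha (by linarith)) h1
  exact mul_pos hc (sub_pos.mpr hgap)

theorem stmt_2_general (a Γ : ℝ) (ha : 0 < a) (hΓ1 : 1 < Γ)
    (h1 : 0 < a + Γ - 1) :
    ∀ x : ℝ, -1 < x → (0 ≤ Qfun a Γ x ∧ (Qfun a Γ x = 0 ↔ x = 0)) := by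
  intro x hx
  rcases eq_or_ne x 0 with rfl | hx0
  · simp [Qfun_zero]
  · have hQ := Qfun_pos ha hΓ1 h1 hx hx0
    exact ⟨hQ.le, iff_of_false hQ.ne' hx0⟩

theorem stmt_2 (a Γ : ℝ) (ha : 0 < a) (hΓ1 : 1 < Γ) (hΓ2 : Γ < 2)
    (h1 : 0 < a + Γ - 1) (h2 : a + Γ - 1 < 1) :
    ∀ x : ℝ, -1 < x → (0 ≤ Qfun a Γ x ∧ (Qfun a Γ x = 0 ↔ x = 0)) :=
  stmt_2_general a Γ ha hΓ1 h1
end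

section
/- Let a, Γ satisfy 0 < a, 1 < Γ < 2, and 0 < a + Γ - 1 < 1, and define Q(x) = (x + (a/(Γ-1))((1+x)^(-(Γ-1)/a) - 1))/(a+Γ-1) and Q'(x) = (1 - (1+x)^(-(a+Γ-1)/a))/(a+Γ-1) for x > -1. Then the identity a(1+x)Q'(x) + (Γ-1)Q(x) - x = 0 holds for all x > -1. -/
noncomputable def Qd (a Γ x : ℝ) : ℝ := (1 - (1+x) ^ (-(a+Γ-1)/a)) / (a+Γ-1)

theorem one_add_mul_Qd {a Γ x : ℝ} (ha : a ≠ 0) (hx : -1 < x) :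
    (1 + x) * Qd a Γ x = (1 + x - (1 + x) ^ (-(Γ - 1) / a)) / (a + Γ - 1) := by
  have hx' : 1 + x ≠ 0 := by linarith
  have hexp : -(a + Γ - 1) / a = -(Γ - 1) / a - 1 := by field_simp; ring
  rw [Qd, hexp, Real.rpow_sub_one hx']
  field_simp

theorem stmt_4_general (a Γ : ℝ) (ha : 0 < a) (hΓ1 : 1 < Γ)
    (h1 : 0 < a + Γ - 1) :
    ∀ x : ℝ, -1 < x →
      a * (1+x) * Qd a Γ x + (Γ-1) * Qfun a Γ x - x = 0 := by
  intro x hx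
  have hΓ : Γ - 1 ≠ 0 := by linarith
  have hs : a + Γ - 1 ≠ 0 := h1.ne'
  rw [mul_assoc, one_add_mul_Qd ha.ne' hx, Qfun]
  field_simp
  ring

theorem stmt_4 (a Γ : ℝ) (ha : 0 < a) (hΓ1 : 1 < Γ) (hΓ2 : Γ < 2)
    (h1 : 0 < a + Γ - 1) (h2 : a + Γ - 1 < 1) :
    ∀ x : ℝ, -1 < x →
      a * (1+x) * Qd a Γ x + (Γ-1) * Qfun a Γ x - x = 0 :=
  stmt_4_general a Γ ha hΓ1 h1
end

section
/- Let a, Γ satisfy 0 < a, 1 < Γ < 2, and 0 < a + Γ - 1 < 1, let m, n, P, eth, s > 0 and x > -1, and define Q(x) = (x + (a/(Γ-1))((1+x)^(-(Γ-1)/a) - 1))/(a+Γ-1). Then F := (m n / P)(1 + eth) + (2-Γ)/(Γ-1) + Q(x) - x > 0. -/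
/-!
With `β = (Γ - 1) / a` and `y = 1 + x`, the function `(2 - Γ) / (Γ - 1) + Q(x) - x` is convex in `y`
and is minimised where `y ^ (-β - 1) = 1 - (a + Γ - 1)`. Bounding `y ^ (-β)` below by its tangent
line at that point (Bernoulli's inequality) shows that this function is at least
`(1 - (a + Γ - 1)) ^ ((Γ - 1) / (a + Γ - 1)) / (Γ - 1) > 0`.
-/

lemma one_sub_mul_le_rpow_neg {t β : ℝ} (ht : 0 < t) (hβ : 0 ≤ β) :
    1 - β * (t - 1) ≤ t ^ (-β) := by
  rw [Real.rpow_def_of_pos ht]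
  nlinarith [Real.add_one_le_exp (Real.log t * -β), Real.log_le_sub_one_of_pos ht]

lemma rpow_neg_tangent_le {β y y₀ : ℝ} (hβ : 0 ≤ β) (hy : 0 < y) (hy₀ : 0 < y₀) :
    y₀ ^ (-β) - β * y₀ ^ (-β - 1) * (y - y₀) ≤ y ^ (-β) := by
  have hbern := one_sub_mul_le_rpow_neg (div_pos hy hy₀) hβ
  rw [Real.div_rpow hy.le hy₀.le, le_div_iff₀ (by positivity)] at hbern
  calc y₀ ^ (-β) - β * y₀ ^ (-β - 1) * (y - y₀)
      = (1 - β * (y / y₀ - 1)) * y₀ ^ (-β) := by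
        rw [Real.rpow_sub_one hy₀.ne']
        field_simp
    _ ≤ y ^ (-β) := hbern

lemma two_sub_div_add_Qfun_sub_sub_eq {a Γ x K y₀ : ℝ} (ha : a ≠ 0) (hΓ : Γ - 1 ≠ 0)
    (hd : a + Γ - 1 ≠ 0) (hy₀ : y₀ * (1 - (a + Γ - 1)) = K) :
    (2 - Γ) / (Γ - 1) + Qfun a Γ x - x - K / (Γ - 1)
      = a / ((Γ - 1) * (a + Γ - 1)) * ((1 + x) ^ (-((Γ - 1) / a))
          - (K - (Γ - 1) / a * (1 - (a + Γ - 1)) * (1 + x - y₀))) := by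
  rw [Qfun, neg_div]
  field_simp
  linear_combination (Γ - 1) * hy₀

lemma rpow_div_le_two_sub_div_add_Qfun_sub {a Γ x : ℝ} (ha : 0 < a) (hΓ : 1 < Γ)
    (hd₀ : 0 < a + Γ - 1) (hd₁ : a + Γ - 1 < 1) (hx : -1 < x) :
    (1 - (a + Γ - 1)) ^ ((Γ - 1) / (a + Γ - 1)) / (Γ - 1)
      ≤ (2 - Γ) / (Γ - 1) + Qfun a Γ x - x := by
  set d := a + Γ - 1
  set u := 1 - d
  set K := u ^ ((Γ - 1) / d)
  set β := (Γ - 1) / a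
  have hu : 0 < u := by linarith
  have hΓ' : 0 < Γ - 1 := by linarith
  have haβ : a * β = Γ - 1 := mul_div_cancel₀ _ ha.ne'
  -- `y₀` is the critical point: the derivative of `Qfun a Γ x - x` is `(1 - (1 + x) ^ (-β - 1)) / d - 1`
  set y₀ := u ^ (-(a / d))
  have hy₀ : 0 < y₀ := Real.rpow_pos_of_pos hu _
  have hy₀_pow_sub_one : y₀ ^ (-β - 1) = u := by
    rw [← Real.rpow_mul hu.le]
    convert Real.rpow_one u using 2
    field_simp
    linear_combination haβ
  have hy₀_pow : y₀ ^ (-β) = K := by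
    rw [← Real.rpow_mul hu.le]
    congr 1
    field_simp
    exact haβ
  have hy₀_mul : y₀ * u = K := by
    rw [← hy₀_pow_sub_one, Real.rpow_sub_one hy₀.ne', hy₀_pow]
    field_simp
  have htangent := rpow_neg_tangent_le (div_pos hΓ' ha).le (by linarith : 0 < 1 + x) hy₀
  rw [hy₀_pow_sub_one, hy₀_pow] at htangent
  have hgap := two_sub_div_add_Qfun_sub_sub_eq (x := x) ha.ne' hΓ'.ne' hd₀.ne' hy₀_mul
  have hgap_nonneg : 0 ≤ a / ((Γ - 1) * d) * ((1 + x) ^ (-β) - (K - β * u * (1 + x - y₀))) :=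
    mul_nonneg (by positivity) (by linarith)
  linarith

theorem stmt_7_general (a Γ m n P eth x : ℝ) (ha : 0 < a) (hΓ1 : 1 < Γ)
    (h1 : 0 < a + Γ - 1) (h2 : a + Γ - 1 < 1)
    (hm : 0 < m) (hn : 0 < n) (hP : 0 < P) (heth : 0 < eth)
    (hx : -1 < x) :
    0 < (m * n / P) * (1 + eth) + (2-Γ)/(Γ-1) + Qfun a Γ x - x := by
  have hmin := rpow_div_le_two_sub_div_add_Qfun_sub ha hΓ1 h1 h2 hx
  have hmin_pos : 0 < (1 - (a + Γ - 1)) ^ ((Γ - 1) / (a + Γ - 1)) / (Γ - 1) :=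
    div_pos (Real.rpow_pos_of_pos (by linarith) _) (by linarith)
  have hrest : 0 < m * n / P * (1 + eth) := by positivity
  linarith

theorem stmt_7 (a Γ m n P eth s x : ℝ) (ha : 0 < a) (hΓ1 : 1 < Γ) (hΓ2 : Γ < 2)
    (h1 : 0 < a + Γ - 1) (h2 : a + Γ - 1 < 1)
    (hm : 0 < m) (hn : 0 < n) (hP : 0 < P) (heth : 0 < eth) (hs : 0 < s)
    (hx : -1 < x) :
    0 < (m * n / P) * (1 + eth) + (2-Γ)/(Γ-1) + Qfun a Γ x - x :=
  stmt_7_general a Γ m n P eth x ha hΓ1 h1 h2 hm hn hP heth hx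
end

section
/- Let a, Γ satisfy 0 < a, 1 < Γ < 2, and 0 < a + Γ - 1 < 1, let ρ̃ ≥ 1/(Γ-1) and c > 0. Then the 4×4 symmetric matrix [[1+ρ̃, 0, -1, -1], [0, c, 0, 0], [-1, 0, 1/Γ, 0], [-1, 0, 0, 1/a]] is positive definite. -/
/-! Eliminating the off-diagonal entries with the pivots `1/Γ` and `1/a` writes the matrix as
`Lᵀ D L` with `L` unitriangular and `D = diag(1 + ρ - Γ - a, c, 1/Γ, 1/a)`, so it is positive
definite exactly when the Schur complement `1 + ρ - Γ - a` is positive; this holds because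
`a + Γ - 1 < 1 < 1/(Γ - 1) ≤ ρ`. -/

open Matrix

theorem Matrix.posDef_arrowhead_of_lt {d c g a : ℝ} (hc : 0 < c) (hg : 0 < g) (ha : 0 < a)
    (hd : g + a < d) :
    (Matrix.of ![![d, 0, -1, -1], ![0, c, 0, 0], ![-1, 0, 1/g, 0], ![-1, 0, 0, 1/a]]).PosDef := by
  let L : Matrix (Fin 4) (Fin 4) ℝ := !![1, 0, 0, 0; 0, 1, 0, 0; -g, 0, 1, 0; -a, 0, 0, 1]
  have hLDL : Matrix.of ![![d, 0, -1, -1], ![0, c, 0, 0], ![-1, 0, 1/g, 0], ![-1, 0, 0, 1/a]] =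
      Lᴴ * diagonal ![d - g - a, c, 1/g, 1/a] * L := by
    ext i j
    fin_cases i <;> fin_cases j <;> simp [L, mul_apply, Fin.sum_univ_four, hg.ne', ha.ne']
    ring
  have hD : (diagonal ![d - g - a, c, 1/g, 1/a]).PosDef := by
    refine PosDef.diagonal fun i => ?_
    fin_cases i <;> simp [hc, hg, ha]
    linarith
  have hL : Function.Injective L.mulVec :=
    mulVec_injective_iff_isUnit.2 <| (isUnit_iff_isUnit_det L).2 <| by
      simp [L, det_succ_row_zero, Fin.sum_univ_succ]
  rw [hLDL]
  exact hD.conjTranspose_mul_mul_same hL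

theorem stmt_11_general (a Γ ρ c : ℝ) (ha : 0 < a) (hΓ1 : 1 < Γ)
    (h2 : a + Γ - 1 < 1)
    (hρ : 1/(Γ-1) ≤ ρ) (hc : 0 < c) :
    (Matrix.of ![![1+ρ, 0, -1, -1], ![0, c, 0, 0],
                 ![-1, 0, 1/Γ, 0], ![-1, 0, 0, 1/a]]).PosDef := by
  have hρ_gt_one : 1 < ρ := (one_lt_one_div (by linarith) (by linarith)).trans_le hρ
  exact posDef_arrowhead_of_lt hc (by linarith) ha (by linarith)

theorem stmt_11 (a Γ ρ c : ℝ) (ha : 0 < a) (hΓ1 : 1 < Γ) (hΓ2 : Γ < 2)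
    (h1 : 0 < a + Γ - 1) (h2 : a + Γ - 1 < 1)
    (hρ : 1/(Γ-1) ≤ ρ) (hc : 0 < c) :
    (Matrix.of ![![1+ρ, 0, -1, -1], ![0, c, 0, 0],
                 ![-1, 0, 1/Γ, 0], ![-1, 0, 0, 1/a]]).PosDef :=
  stmt_11_general a Γ ρ c ha hΓ1 h2 hρ hc
end

section
/- Let θ > 0 and let Π̃ : [0,∞) → ℝ be differentiable satisfying Π̃'(ξ) + Π̃(ξ) = -(1+Π̃(ξ))θ with Π̃(0) = 0. Then -θ/(1+θ) ≤ Π̃(ξ) ≤ 0 for all ξ ≥ 0; in particular Π̃(ξ) > -1. -/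
open Real Set

/-! The equation is the affine ODE `f' = -θ - (1 + θ) f`, whose solution through `f 0 = 0` is
`f ξ = c (e^{-(1+θ)ξ} - 1)` with `c = θ / (1 + θ) ∈ (0, 1)`. Since `e^{-(1+θ)ξ} ∈ (0, 1]`, `f` stays
in `[-c, 0]`, and `-c > -1`. -/

theorem eq_of_hasDerivAt_affine {f : ℝ → ℝ} {a b : ℝ} (ha : a ≠ 0)
    (hf : ∀ x, 0 ≤ x → HasDerivAt f (b - a * f x) x) {x : ℝ} (hx : 0 ≤ x) :
    f x = b / a + (f 0 - b / a) * exp (-(a * x)) := by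
  -- `exp (a x) * (f x - b / a)` is an integral of motion
  set g : ℝ → ℝ := fun y => exp (a * y) * (f y - b / a) with hg
  have hg' : ∀ y, 0 ≤ y → HasDerivAt g 0 y := by
    intro y hy
    have hexp : HasDerivAt (fun y => exp (a * y)) (exp (a * y) * a) y := by
      simpa using ((hasDerivAt_id y).const_mul a).exp
    exact (hexp.mul ((hf y hy).sub_const (b / a))).congr_deriv (by field_simp; ring)
  have hconst : g x = g 0 :=
    constant_of_has_deriv_right_zero
      (fun y hy => (hg' y hy.1).continuousAt.continuousWithinAt)
      (fun y hy => (hg' y hy.1).hasDerivWithinAt) x ⟨hx, le_rfl⟩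
  simp only [hg, mul_zero, exp_zero, one_mul] at hconst
  rw [exp_neg, ← hconst]
  field_simp
  ring

theorem stmt_13 (θ : ℝ) (hθ : 0 < θ) (f : ℝ → ℝ)
    (hf : ∀ ξ : ℝ, 0 ≤ ξ → HasDerivAt f (-(f ξ) - (1 + f ξ) * θ) ξ)
    (h0 : f 0 = 0) :
    ∀ ξ : ℝ, 0 ≤ ξ → (-θ/(1+θ) ≤ f ξ ∧ f ξ ≤ 0 ∧ -1 < f ξ) := by
  intro ξ hξ
  have hθ1 : 0 < 1 + θ := by linarith
  have hf' : ∀ x, 0 ≤ x → HasDerivAt f (-θ - (1 + θ) * f x) x := fun x hx =>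
    (hf x hx).congr_deriv (by ring)
  have hsol := eq_of_hasDerivAt_affine hθ1.ne' hf' hξ
  set c := θ / (1 + θ) with hc
  have hc0 : 0 < c := div_pos hθ hθ1
  have hc1 : c < 1 := (div_lt_one hθ1).mpr (by linarith)
  have he0 : 0 < exp (-((1 + θ) * ξ)) := exp_pos _
  have he1 : exp (-((1 + θ) * ξ)) ≤ 1 := exp_le_one_iff.mpr (neg_nonpos.mpr (mul_nonneg hθ1.le hξ))
  rw [h0, neg_div, ← hc, zero_sub] at hsol
  rw [neg_div, ← hc, hsol]
  refine ⟨?_, ?_, ?_⟩ <;> nlinarith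
end

section
/- Let a, Γ satisfy 0 < a, 1 < Γ < 2, and 0 < a + Γ - 1 < 1, and let Π̃ > -1. Then the high-density squared speed w∞² := (a+Γ-1) / (1 + a·(1+Π̃)^(-(a+Γ-1)/a) / ((Γ-1)(a+Γ))) satisfies 0 < w∞² < 1. -/
theorem div_one_add_mem_Ioo_zero_one {c x : ℝ} (hc₀ : 0 < c) (hc₁ : c < 1) (hx : 0 ≤ x) :
    0 < c / (1 + x) ∧ c / (1 + x) < 1 :=
  ⟨div_pos hc₀ (by linarith), (div_lt_one (by linarith)).2 (by linarith)⟩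

theorem stmt_16_general (a Γ Pi : ℝ) (ha : 0 < a) (hΓ1 : 1 < Γ)
    (h1 : 0 < a + Γ - 1) (h2 : a + Γ - 1 < 1) (hPi : -1 < Pi) :
    0 < (a+Γ-1) / (1 + a * (1+Pi) ^ (-(a+Γ-1)/a) / ((Γ-1)*(a+Γ))) ∧
    (a+Γ-1) / (1 + a * (1+Pi) ^ (-(a+Γ-1)/a) / ((Γ-1)*(a+Γ))) < 1 := by
  have hpow : 0 ≤ (1+Pi) ^ (-(a+Γ-1)/a) := Real.rpow_nonneg (by linarith) _
  have hΓ : 0 ≤ (Γ-1)*(a+Γ) := mul_nonneg (by linarith) (by linarith)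
  exact div_one_add_mem_Ioo_zero_one h1 h2 (div_nonneg (mul_nonneg ha.le hpow) hΓ)

theorem stmt_16 (a Γ Pi : ℝ) (ha : 0 < a) (hΓ1 : 1 < Γ) (hΓ2 : Γ < 2)
    (h1 : 0 < a + Γ - 1) (h2 : a + Γ - 1 < 1) (hPi : -1 < Pi) :
    0 < (a+Γ-1) / (1 + a * (1+Pi) ^ (-(a+Γ-1)/a) / ((Γ-1)*(a+Γ))) ∧
    (a+Γ-1) / (1 + a * (1+Pi) ^ (-(a+Γ-1)/a) / ((Γ-1)*(a+Γ))) < 1 :=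
  stmt_16_general a Γ Pi ha hΓ1 h1 h2 hPi
end

section
/- Define Π̃(ξ) = -e^(-ξ)(ξ-1)·(-e·Ei(ξ-1) + e·Ei(-1) + 1) - 1 for ξ ∈ [0,1), where Ei is the exponential integral. Then Π̃ solves the ODE dΠ̃/dξ + Π̃ = -(1+Π̃)/(1-ξ) with Π̃(0) = 0. -/
/-!
Writing `Π̃ = (1 - ξ) e^{-ξ} h - 1`, the ODE `Π̃' + Π̃ = -(1 + Π̃)/(1 - ξ)` reduces to
`(1 - ξ) e^{-ξ} h' = 1`, i.e. `h' = e^ξ / (1 - ξ)`; the chain rule and `Ei' x = eˣ / x` give exactly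
this for `h ξ = -e Ei(ξ - 1) + e Ei(-1) + 1`, and `h 0 = 1` gives `Π̃(0) = 0`.
-/

open Real

lemma hasDerivAt_exp_neg_mul_sub_one_mul_sub_one {h : ℝ → ℝ} {ξ : ℝ} (hξ : ξ ≠ 1)
    (hh : HasDerivAt h (exp ξ / (1 - ξ)) ξ) :
    HasDerivAt (fun x => -exp (-x) * (x - 1) * h x - 1)
      (-(-exp (-ξ) * (ξ - 1) * h ξ - 1) - (1 + (-exp (-ξ) * (ξ - 1) * h ξ - 1)) / (1 - ξ)) ξ := by
  have hexp : HasDerivAt (fun x => -exp (-x)) (exp (-ξ)) ξ :=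
    ((hasDerivAt_neg ξ).exp).neg.congr_deriv (by ring)
  refine (((hexp.mul ((hasDerivAt_id ξ).sub_const 1)).mul hh).sub_const 1).congr_deriv ?_
  have hsub : (1 : ℝ) - ξ ≠ 0 := sub_ne_zero.mpr (Ne.symm hξ)
  have hinv : exp (-ξ) * exp ξ = 1 := by rw [← exp_add, neg_add_cancel, exp_zero]
  simp only [id, Pi.mul_apply]
  field_simp
  linear_combination (1 - ξ) * hinv

lemma hasDerivAt_exp_one_mul_ei_sub_one {Ei : ℝ → ℝ}
    (hEi : ∀ x : ℝ, x < 0 → HasDerivAt Ei (exp x / x) x) {ξ : ℝ} (hξ : ξ < 1) (c : ℝ) :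
    HasDerivAt (fun x => -exp 1 * Ei (x - 1) + c) (exp ξ / (1 - ξ)) ξ := by
  refine ((((hEi (ξ - 1) (by linarith)).comp ξ ((hasDerivAt_id ξ).sub_const 1)).const_mul
    (-exp 1)).add_const c).congr_deriv ?_
  rw [mul_one, ← neg_sub ξ 1, div_neg, neg_mul, mul_div_assoc', ← exp_add, add_sub_cancel]

theorem stmt_18 (Ei : ℝ → ℝ)
    (hEi : ∀ x : ℝ, x < 0 → HasDerivAt Ei (Real.exp x / x) x) :
    (∀ ξ ∈ Set.Ico (0:ℝ) 1,
      HasDerivAt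
        (fun ξ : ℝ =>
          -(Real.exp (-ξ)) * (ξ - 1) *
            (-(Real.exp 1) * Ei (ξ - 1) + Real.exp 1 * Ei (-1) + 1) - 1)
        (-((-(Real.exp (-ξ)) * (ξ - 1) *
            (-(Real.exp 1) * Ei (ξ - 1) + Real.exp 1 * Ei (-1) + 1) - 1))
          - (1 + (-(Real.exp (-ξ)) * (ξ - 1) *
            (-(Real.exp 1) * Ei (ξ - 1) + Real.exp 1 * Ei (-1) + 1) - 1)) / (1 - ξ)) ξ) ∧
    (-(Real.exp (-(0:ℝ))) * ((0:ℝ) - 1) *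
        (-(Real.exp 1) * Ei ((0:ℝ) - 1) + Real.exp 1 * Ei (-1) + 1) - 1 = 0) := by
  refine ⟨fun ξ ⟨_, hξ⟩ => ?_, by simp⟩
  have hh := hasDerivAt_exp_one_mul_ei_sub_one hEi hξ (exp 1 * Ei (-1) + 1)
  simp only [← add_assoc] at hh
  exact hasDerivAt_exp_neg_mul_sub_one_mul_sub_one hξ.ne hh
end

section
/- Let Π̃ : [0,1) → ℝ be differentiable with Π̃(0) = 0 and Π̃'(ξ) + Π̃(ξ) = -(1+Π̃(ξ))/(1-ξ) for ξ ∈ [0,1). Then Π̃(ξ) > -1 for all ξ ∈ [0,1). -/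
/-!
With `g = 1 + f` the equation reads `g' = 1 - g - g / (1 - ξ)`, and the integrating factor
`e^ξ / (1 - ξ)` turns it into `(g e^ξ / (1 - ξ))' = e^ξ / (1 - ξ) > 0`. Hence `g e^ξ / (1 - ξ)`
is increasing on `[0, 1)` from its value `1` at `0`, so `g` stays positive.
-/

open Real Set

theorem hasDerivAt_one_add_mul_exp_div_one_sub {f : ℝ → ℝ} {x : ℝ} (hx : x ≠ 1)
    (hf : HasDerivAt f (-(f x) - (1 + f x) / (1 - x)) x) :
    HasDerivAt (fun x => (1 + f x) * exp x / (1 - x)) (exp x / (1 - x)) x := by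
  have hx' : 1 - x ≠ 0 := sub_ne_zero.mpr hx.symm
  refine ((((hasDerivAt_const x 1).add hf).mul (hasDerivAt_exp x)).div
    ((hasDerivAt_const x 1).sub (hasDerivAt_id x)) hx').congr_deriv ?_
  simp only [Pi.add_apply, Pi.sub_apply, Pi.mul_apply, id]
  field_simp
  ring

theorem monotoneOn_one_add_mul_exp_div_one_sub {f : ℝ → ℝ}
    (hf : ∀ ξ ∈ Ico (0:ℝ) 1, HasDerivAt f (-(f ξ) - (1 + f ξ) / (1 - ξ)) ξ) :
    MonotoneOn (fun x => (1 + f x) * exp x / (1 - x)) (Ico 0 1) := by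
  have hderiv : ∀ x ∈ Ico (0:ℝ) 1,
      HasDerivAt (fun x => (1 + f x) * exp x / (1 - x)) (exp x / (1 - x)) x :=
    fun x hx => hasDerivAt_one_add_mul_exp_div_one_sub hx.2.ne (hf x hx)
  refine monotoneOn_of_hasDerivWithinAt_nonneg (convex_Ico 0 1)
    (fun x hx => (hderiv x hx).continuousAt.continuousWithinAt)
    (fun x hx => (hderiv x (interior_subset hx)).hasDerivWithinAt) fun x hx => ?_
  have hx1 : 0 < 1 - x := sub_pos.mpr (interior_subset hx).2
  positivity

theorem stmt_19 (f : ℝ → ℝ) (h0 : f 0 = 0)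
    (hf : ∀ ξ ∈ Set.Ico (0:ℝ) 1,
      HasDerivAt f (-(f ξ) - (1 + f ξ) / (1 - ξ)) ξ) :
    ∀ ξ ∈ Set.Ico (0:ℝ) 1, -1 < f ξ := by
  intro ξ hξ
  have hle : (1 + f 0) * exp 0 / (1 - 0) ≤ (1 + f ξ) * exp ξ / (1 - ξ) :=
    monotoneOn_one_add_mul_exp_div_one_sub hf ⟨le_rfl, one_pos⟩ hξ hξ.1
  have hpos : 0 < (1 + f ξ) * exp ξ / (1 - ξ) := by
    simp only [h0, add_zero, exp_zero, sub_zero, div_one, mul_one] at hle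
    linarith
  rw [div_pos_iff_of_pos_right (sub_pos.mpr hξ.2), mul_pos_iff_of_pos_right (exp_pos ξ)] at hpos
  linarith
end
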